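/- Let n ≥ 1, let T be a tree on n vertices, and let S_n be a star on n vertices. Then C(k;T) ≤ C(k;S_n) for every integer k ≥ 0. -/

import Mathlib

open SimpleGraph Matrix Finset

/-! ### Auxiliary lemmas -/

section parity
variable {V : Type*} {T : SimpleGraph V}

/-- In a tree, any walk has the same parity of length as any path with equal endpoints. -/
lemma tree_walk_length_parity (hT : T.IsTree) {u v : V} (p : T.Walk u v) :
    ∀ (q : T.Walk u v), q.IsPath → p.length % 2 = q.length % 2 := by
  induction p with
  | nil =>
    intro q hq
    have : (Walk.nil : T.Walk _ _) = q := (hT.existsUnique_path _ _).unique Walk.IsPath.nil hq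
    simp [← this]
  | @cons a b c h p ih =>
    intro q hq
    classical
    obtain ⟨r, hr⟩ : ∃ r : T.Walk b c, r.IsPath := ⟨(hT.existsUnique_path b c).choose,
      (hT.existsUnique_path b c).choose_spec.1⟩
    have hpr := ih r hr
    by_cases ha : a ∈ r.support
    · have htake : (r.takeUntil a ha).IsPath := hr.takeUntil ha
      have hone : (Walk.cons h.symm Walk.nil : T.Walk b a) = r.takeUntil a ha :=
        (hT.existsUnique_path b a).unique (by simp [Walk.isPath_def, h.ne']) htake
      have hdrop : (r.dropUntil a ha).IsPath := hr.dropUntil ha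
      have hq' : (r.dropUntil a ha) = q := (hT.existsUnique_path a c).unique hdrop hq
      have hlen : (r.takeUntil a ha).length + (r.dropUntil a ha).length = r.length := by
        rw [← Walk.length_append, Walk.take_spec]
      have h1 : (r.takeUntil a ha).length = 1 := by rw [← hone]; simp
      rw [h1, hq'] at hlen
      rw [Walk.length_cons]
      omega
    · have : (Walk.cons h r) = q := (hT.existsUnique_path a c).unique (hr.cons ha) hq
      rw [← this]
      simp only [Walk.length_cons]
      omega

lemma tree_closed_walk_even (hT : T.IsTree) {v : V} (p : T.Walk v v) : p.length % 2 = 0 := by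
  simpa using tree_walk_length_parity hT p Walk.nil Walk.IsPath.nil
end parity

noncomputable def closedWalkCount' {V : Type*} [Fintype V] (G : SimpleGraph V) (k : ℕ) : ℕ :=
  ∑ v : V, Nat.card {p : G.Walk v v // p.length = k}

lemma closedWalkCount'_cast {V : Type*} [Fintype V] [DecidableEq V] (G : SimpleGraph V)
    [DecidableRel G.Adj] (k : ℕ) :
    ((closedWalkCount' G k : ℝ)) = Matrix.trace (G.adjMatrix ℝ ^ k) := by
  rw [closedWalkCount', Matrix.trace]
  push_cast
  refine Finset.sum_congr rfl fun v _ => ?_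
  rw [Matrix.diag_apply, adjMatrix_pow_apply_eq_card_walk]
  norm_cast
  rw [Nat.card_eq_fintype_card]
  rfl

lemma trace_pow_eq_sum_eigenvalues {m : Type*} [Fintype m] [DecidableEq m]
    {A : Matrix m m ℝ} (hA : A.IsHermitian) (k : ℕ) :
    Matrix.trace (A ^ k) = ∑ i, (hA.eigenvalues i) ^ k := by
  set U : Matrix m m ℝ := (hA.eigenvectorUnitary : Matrix m m ℝ)
  have hU1 : star U * U = 1 := (Matrix.mem_unitaryGroup_iff').mp hA.eigenvectorUnitary.2
  have hU2 : U * star U = 1 := (Matrix.mem_unitaryGroup_iff).mp hA.eigenvectorUnitary.2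
  set D : Matrix m m ℝ := Matrix.diagonal (RCLike.ofReal ∘ hA.eigenvalues)
  have hspec : A = U * D * star U := hA.spectral_theorem
  have hpow : A ^ k = U * D ^ k * star U := by
    induction k with
    | zero => simpa using hU2.symm
    | succ k ih =>
      rw [pow_succ, ih, hspec, pow_succ]
      simp only [Matrix.mul_assoc]
      rw [← Matrix.mul_assoc (star U) U, hU1, Matrix.one_mul]
  rw [hpow, Matrix.trace_mul_cycle, hU1, Matrix.one_mul,
    Matrix.diagonal_pow, Matrix.trace_diagonal]
  simp

section tree
variable {V : Type*} [Fintype V] [DecidableEq V] {T : SimpleGraph V} [DecidableRel T.Adj]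

/-- In a tree, the sum of degrees over the neighborhood of a vertex is at most `n - 1`. -/
lemma tree_nbhd_degree_sum (hT : T.IsTree) (j : V) :
    ∑ w ∈ T.neighborFinset j, T.degree w ≤ Fintype.card V - 1 := by
  classical
  have uniq : ∀ {a b : V} (p q : T.Walk a b), p.IsPath → q.IsPath → p = q := fun p q hp hq =>
    (hT.existsUnique_path _ _).unique hp hq
  have mkpath : ∀ {a b c : V} (h1 : T.Adj a b) (h2 : T.Adj b c), a ≠ c →
      (Walk.cons h1 (Walk.cons h2 Walk.nil)).IsPath := fun h1 h2 hac => by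
    simp [Walk.isPath_def, h1.ne, h2.ne, hac]
  have hcard : ∑ w ∈ T.neighborFinset j, T.degree w
      = ((T.neighborFinset j).sigma (fun w => T.neighborFinset w)).card := by
    rw [Finset.card_sigma]; rfl
  rw [hcard]
  have hc : (Finset.univ.erase j).card = Fintype.card V - 1 := by
    rw [Finset.card_erase_of_mem (Finset.mem_univ j), Finset.card_univ]
  rw [← hc]
  apply Finset.card_le_card_of_injOn (fun p => if p.2 = j then p.1 else p.2)
  · rintro ⟨w, l⟩ hp
    rw [Finset.mem_coe, Finset.mem_sigma, mem_neighborFinset, mem_neighborFinset] at hp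
    obtain ⟨hjw, hwl⟩ := hp
    dsimp only
    split_ifs with h
    · exact Finset.mem_erase.2 ⟨hjw.ne', Finset.mem_univ _⟩
    · exact Finset.mem_erase.2 ⟨h, Finset.mem_univ _⟩
  · rintro ⟨w, l⟩ hp ⟨w', l'⟩ hq hf
    simp only [Finset.coe_sigma, Set.mem_sigma_iff, Finset.mem_coe, mem_neighborFinset] at hp hq
    obtain ⟨hjw, hwl⟩ := hp
    obtain ⟨hjw', hwl'⟩ := hq
    dsimp only at hf
    split_ifs at hf with h1 h2 h2
    · subst h1; subst h2; subst hf; rfl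
    · exfalso
      have hw'w : T.Adj w' w := by rw [hf]; exact hwl'
      exact absurd (congrArg Walk.length (uniq (Walk.cons hjw Walk.nil)
        (Walk.cons hjw' (Walk.cons hw'w Walk.nil))
        (by simp [Walk.isPath_def, hjw.ne]) (mkpath hjw' hw'w hjw.ne))) (by simp)
    · exfalso
      have hww' : T.Adj w w' := by rw [← hf]; exact hwl
      exact absurd (congrArg Walk.length (uniq (Walk.cons hjw' Walk.nil)
        (Walk.cons hjw (Walk.cons hww' Walk.nil))
        (by simp [Walk.isPath_def, hjw'.ne]) (mkpath hjw hww' hjw'.ne))) (by simp)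
    · subst hf
      have hww' : w = w' := by
        have heq := uniq (Walk.cons hjw (Walk.cons hwl Walk.nil))
          (Walk.cons hjw' (Walk.cons hwl' Walk.nil))
          (mkpath hjw hwl (Ne.symm h1)) (mkpath hjw' hwl' (Ne.symm h1))
        simpa using congrArg Walk.support heq
      subst hww'; rfl

lemma tree_rowsum_sq (hT : T.IsTree) (j : V) :
    ∑ l, (T.adjMatrix ℝ ^ 2) j l ≤ (Fintype.card V : ℝ) - 1 := by
  have h2 : ∑ l, (T.adjMatrix ℝ ^ 2) j l = ∑ u ∈ T.neighborFinset j, (T.degree u : ℝ) := by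
    simp_rw [pow_two, adjMatrix_mul_apply]
    rw [Finset.sum_comm]
    refine Finset.sum_congr rfl fun u _ => ?_
    simp [adjMatrix_apply, Finset.sum_boole, degree, neighborFinset_eq_filter]
  rw [h2]
  have hle := tree_nbhd_degree_sum hT j
  have hpos : 0 < Fintype.card V := Fintype.card_pos_iff.2 ⟨j⟩
  calc ∑ u ∈ T.neighborFinset j, (T.degree u : ℝ)
      = ((∑ w ∈ T.neighborFinset j, T.degree w : ℕ) : ℝ) := by push_cast; rfl
    _ ≤ ((Fintype.card V - 1 : ℕ) : ℝ) := Nat.cast_le.2 hle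
    _ = (Fintype.card V : ℝ) - 1 := by rw [Nat.cast_sub hpos]; simp

lemma adjMatrix_sq_nonneg (a b : V) : 0 ≤ (T.adjMatrix ℝ ^ 2) a b := by
  rw [pow_two, Matrix.mul_apply]
  exact Finset.sum_nonneg fun w _ => mul_nonneg (by simp [adjMatrix_apply]; positivity)
    (by simp [adjMatrix_apply]; positivity)

lemma tree_eig_sq_le (hT : T.IsTree) (hA : (T.adjMatrix ℝ).IsHermitian) (i : V) :
    (hA.eigenvalues i) ^ 2 ≤ (Fintype.card V : ℝ) - 1 := by
  set A := T.adjMatrix ℝ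
  set μ := hA.eigenvalues i
  have hAv : A *ᵥ ⇑(hA.eigenvectorBasis i) = μ • ⇑(hA.eigenvectorBasis i) :=
    hA.mulVec_eigenvectorBasis i
  have hsq : (A ^ 2) *ᵥ ⇑(hA.eigenvectorBasis i) = (μ ^ 2) • ⇑(hA.eigenvectorBasis i) := by
    rw [pow_two, ← mulVec_mulVec, hAv, mulVec_smul, hAv, smul_smul, ← pow_two]
  have hv_ne : (⇑(hA.eigenvectorBasis i) : V → ℝ) ≠ 0 := by
    intro h
    exact hA.eigenvectorBasis.orthonormal.ne_zero i (by ext j; exact congrFun h j)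
  have hev : Module.End.HasEigenvalue (Matrix.toLin' (A ^ 2)) (μ ^ 2) := by
    apply Module.End.hasEigenvalue_of_hasEigenvector (x := ⇑(hA.eigenvectorBasis i))
    refine ⟨Module.End.mem_eigenspace_iff.2 ?_, hv_ne⟩
    rw [Matrix.toLin'_apply, hsq]
  obtain ⟨k0, hk⟩ := eigenvalue_mem_ball hev
  rw [Metric.mem_closedBall, Real.dist_eq] at hk
  have h1 : μ ^ 2 ≤ (A ^ 2) k0 k0 + ∑ j ∈ Finset.univ.erase k0, ‖(A ^ 2) k0 j‖ := by
    have := abs_le.1 hk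
    linarith [this.2]
  have h2 : (A ^ 2) k0 k0 + ∑ j ∈ Finset.univ.erase k0, ‖(A ^ 2) k0 j‖
      = ∑ j, (A ^ 2) k0 j := by
    have hnorm : ∀ j, ‖(A ^ 2) k0 j‖ = (A ^ 2) k0 j := fun j =>
      Real.norm_of_nonneg (adjMatrix_sq_nonneg _ _)
    simp_rw [hnorm]
    exact Finset.add_sum_erase _ _ (Finset.mem_univ k0)
  calc μ ^ 2 ≤ _ := h1
    _ = ∑ j, (A ^ 2) k0 j := h2
    _ ≤ _ := tree_rowsum_sq hT k0

lemma tree_trace_sq [Nonempty V] (hT : T.IsTree) :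
    Matrix.trace ((T.adjMatrix ℝ) ^ 2) = 2 * ((Fintype.card V : ℝ) - 1) := by
  classical
  have h1 : Matrix.trace ((T.adjMatrix ℝ) ^ 2) = ∑ i, (T.degree i : ℝ) := by
    rw [pow_two, Matrix.trace]
    exact Finset.sum_congr rfl fun i _ => by
      rw [Matrix.diag_apply, adjMatrix_mul_self_apply_self]
  rw [h1]
  have h2 : ∑ i, (T.degree i : ℝ) = ((∑ i, T.degree i : ℕ) : ℝ) := by push_cast; rfl
  rw [h2, sum_degrees_eq_twice_card_edges]
  have h3 := hT.card_edgeFinset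
  have : (T.edgeFinset.card : ℝ) = (Fintype.card V : ℝ) - 1 := by
    have := congrArg (fun x : ℕ => (x : ℝ)) h3
    push_cast at this
    linarith
  push_cast
  rw [this]
end tree

/-! ### Star lemmas -/

lemma vecMulVec_mul_vecMulVec {m : Type*} [Fintype m] (a b c d : m → ℝ) :
    vecMulVec a b * vecMulVec c d = (b ⬝ᵥ c) • vecMulVec a d := by
  ext i j
  simp only [Matrix.mul_apply, vecMulVec_apply, Matrix.smul_apply, dotProduct, smul_eq_mul,
    Finset.sum_mul, Finset.mul_sum]
  ring_nf
  exact Finset.sum_congr rfl fun k _ => by ring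

lemma trace_vecMulVec {m : Type*} [Fintype m] (a b : m → ℝ) :
    Matrix.trace (vecMulVec a b) = a ⬝ᵥ b := by
  simp [Matrix.trace, vecMulVec_apply, dotProduct]

section star
variable {V : Type*} [Fintype V] [DecidableEq V] {S : SimpleGraph V} [DecidableRel S.Adj]
  {c : V} (hAdj : ∀ u v : V, S.Adj u v ↔ u ≠ v ∧ (u = c ∨ v = c))

noncomputable def xx (c : V) : V → ℝ := fun v => if v = c then 0 else 1
noncomputable def ee (c : V) : V → ℝ := Pi.single c 1

include hAdj in
lemma star_adj_eq : S.adjMatrix ℝ = vecMulVec (ee c) (xx c) + vecMulVec (xx c) (ee c) := by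
  ext u v
  simp only [Matrix.add_apply, vecMulVec_apply, adjMatrix_apply, hAdj, xx, ee, Pi.single_apply]
  by_cases hu : u = c <;> by_cases hv : v = c <;> simp [hu, hv, Ne.symm, eq_comm]

lemma xx_dot_xx : (xx c : V → ℝ) ⬝ᵥ xx c = (Fintype.card V : ℝ) - 1 := by
  classical
  simp only [dotProduct, xx]
  rw [← Finset.add_sum_erase _ _ (Finset.mem_univ c)]
  have h1 : ∀ v ∈ Finset.univ.erase c,
      ((if v = c then (0:ℝ) else 1) * (if v = c then 0 else 1)) = 1 := by
    intro v hv
    simp [Finset.ne_of_mem_erase hv]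
  rw [Finset.sum_congr rfl h1]
  simp [Finset.card_erase_of_mem, Nat.cast_sub (Fintype.card_pos_iff.2 ⟨c⟩)]

lemma ee_dot_xx : (ee c : V → ℝ) ⬝ᵥ xx c = 0 := by
  simp only [dotProduct, ee, xx, Pi.single_apply]
  exact Finset.sum_eq_zero fun x _ => by split_ifs <;> simp

lemma xx_dot_ee : (xx c : V → ℝ) ⬝ᵥ ee c = 0 := by
  simp only [dotProduct, ee, xx, Pi.single_apply]
  exact Finset.sum_eq_zero fun x _ => by split_ifs <;> simp

lemma ee_dot_ee : (ee c : V → ℝ) ⬝ᵥ ee c = 1 := by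
  simp [dotProduct, ee, Pi.single_apply]

include hAdj in
lemma star_sq : (S.adjMatrix ℝ) ^ 2
    = ((Fintype.card V : ℝ) - 1) • vecMulVec (ee c) (ee c) + vecMulVec (xx c) (xx c) := by
  rw [pow_two, star_adj_eq hAdj, add_mul, mul_add, mul_add,
    _root_.vecMulVec_mul_vecMulVec, _root_.vecMulVec_mul_vecMulVec, _root_.vecMulVec_mul_vecMulVec,
    _root_.vecMulVec_mul_vecMulVec, xx_dot_ee, ee_dot_xx, xx_dot_xx, ee_dot_ee]
  simp only [zero_smul, one_smul, add_zero, zero_add]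

include hAdj in
lemma star_cube : (S.adjMatrix ℝ) ^ 3 = ((Fintype.card V : ℝ) - 1) • S.adjMatrix ℝ := by
  have h3 : (S.adjMatrix ℝ) ^ 3 = (S.adjMatrix ℝ) ^ 2 * S.adjMatrix ℝ := pow_succ _ _
  rw [h3, star_sq hAdj, star_adj_eq hAdj, add_mul, mul_add, mul_add, Matrix.smul_mul,
    Matrix.smul_mul, _root_.vecMulVec_mul_vecMulVec, _root_.vecMulVec_mul_vecMulVec,
    _root_.vecMulVec_mul_vecMulVec, _root_.vecMulVec_mul_vecMulVec, ee_dot_ee, ee_dot_xx, xx_dot_ee, xx_dot_xx]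
  simp only [zero_smul, one_smul, add_zero, zero_add, smul_add, smul_smul, smul_zero]

include hAdj in
lemma star_trace_sq : Matrix.trace ((S.adjMatrix ℝ) ^ 2) = 2 * ((Fintype.card V : ℝ) - 1) := by
  rw [star_sq hAdj, Matrix.trace_add, Matrix.trace_smul, _root_.trace_vecMulVec, _root_.trace_vecMulVec,
    ee_dot_ee, xx_dot_xx, smul_eq_mul]
  ring

include hAdj in
lemma star_trace_pow (m : ℕ) :
    Matrix.trace ((S.adjMatrix ℝ) ^ (2 * m + 2)) = 2 * ((Fintype.card V : ℝ) - 1) ^ (m + 1) := by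
  induction m with
  | zero => simpa using star_trace_sq hAdj
  | succ m ih =>
    have key : (S.adjMatrix ℝ) ^ (2 * (m + 1) + 2)
        = ((Fintype.card V : ℝ) - 1) • (S.adjMatrix ℝ) ^ (2 * m + 2) := by
      have : 2 * (m + 1) + 2 = (2 * m + 1) + 3 := by ring
      rw [this, pow_add, star_cube hAdj, Matrix.mul_smul, ← pow_succ]
    rw [key, Matrix.trace_smul, ih, smul_eq_mul]
    ring
end star


/-- The number of closed walks of length `k` in `G` (closed walks are counted with
their starting vertex and direction). -/
noncomputable def closedWalkCount {V : Type*} [Fintype V] (G : SimpleGraph V) (k : ℕ) : ℕ :=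
  ∑ v : V, Nat.card {p : G.Walk v v // p.length = k}

theorem stmt12 (n : ℕ) (hn : 1 ≤ n) (T S : SimpleGraph (Fin n)) (hT : T.IsTree)
    (hS : ∃ c : Fin n, ∀ u v : Fin n, S.Adj u v ↔ u ≠ v ∧ (u = c ∨ v = c)) :
    ∀ k : ℕ, closedWalkCount T k ≤ closedWalkCount S k := by
  classical
  obtain ⟨c, hAdj⟩ := hS
  intro k
  haveI : Nonempty (Fin n) := ⟨⟨0, hn⟩⟩
  have hdef : ∀ (G : SimpleGraph (Fin n)) (k : ℕ),
      closedWalkCount G k = closedWalkCount' G k := fun _ _ => rfl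
  rcases Nat.even_or_odd k with he | ho
  · obtain ⟨m, hm⟩ := he
    rcases Nat.eq_zero_or_pos m with rfl | hmpos
    · have heq : closedWalkCount T 0 = closedWalkCount S 0 := by
        rw [hdef, hdef]
        have h1 := closedWalkCount'_cast T 0
        have h2 := closedWalkCount'_cast S 0
        simp only [pow_zero] at h1 h2
        exact_mod_cast h1.trans h2.symm
      simpa [hm] using le_of_eq heq
    · obtain ⟨m', rfl⟩ : ∃ m', m = m' + 1 := ⟨m - 1, by omega⟩
      have hk : k = 2 * m' + 2 := by omega
      subst hk
      have hA : (T.adjMatrix ℝ).IsHermitian := by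
        show (T.adjMatrix ℝ)ᴴ = T.adjMatrix ℝ
        ext i j
        simp [Matrix.conjTranspose_apply, adjMatrix_apply, adj_comm]
      have hbound : ∀ i, hA.eigenvalues i ^ 2 ≤ (n : ℝ) - 1 := by
        intro i
        have := tree_eig_sq_le hT hA i
        simpa [Fintype.card_fin] using this
      have hnn : (0:ℝ) ≤ (n : ℝ) - 1 := by
        have : (1:ℝ) ≤ (n:ℝ) := by exact_mod_cast hn
        linarith
      have htr2 : ∑ i, hA.eigenvalues i ^ 2 = 2 * ((n : ℝ) - 1) := by
        rw [← trace_pow_eq_sum_eigenvalues hA 2]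
        simpa [Fintype.card_fin] using tree_trace_sq hT
      have hchain : (closedWalkCount' T (2 * m' + 2) : ℝ)
          ≤ (closedWalkCount' S (2 * m' + 2) : ℝ) := by
        rw [closedWalkCount'_cast, closedWalkCount'_cast]
        rw [trace_pow_eq_sum_eigenvalues hA]
        have hstar := star_trace_pow hAdj m'
        rw [Fintype.card_fin] at hstar
        rw [hstar]
        calc ∑ i, hA.eigenvalues i ^ (2 * m' + 2)
            = ∑ i, (hA.eigenvalues i ^ 2) ^ (m' + 1) := by
              refine Finset.sum_congr rfl fun i _ => ?_
              rw [← pow_mul]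
              ring_nf
          _ ≤ ∑ i, ((n : ℝ) - 1) ^ m' * hA.eigenvalues i ^ 2 := by
              refine Finset.sum_le_sum fun i _ => ?_
              rw [pow_succ]
              exact mul_le_mul_of_nonneg_right
                (pow_le_pow_left₀ (sq_nonneg _) (hbound i) m') (sq_nonneg _)
          _ = ((n : ℝ) - 1) ^ m' * ∑ i, hA.eigenvalues i ^ 2 := by rw [Finset.mul_sum]
          _ = ((n : ℝ) - 1) ^ m' * (2 * ((n : ℝ) - 1)) := by rw [htr2]
          _ = 2 * ((n : ℝ) - 1) ^ (m' + 1) := by ring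
      rw [hdef, hdef]
      exact_mod_cast hchain
  · have hzero : closedWalkCount T k = 0 := by
      rw [hdef, closedWalkCount']
      refine Finset.sum_eq_zero fun v _ => ?_
      haveI : IsEmpty {p : T.Walk v v // p.length = k} := ⟨fun ⟨p, hp⟩ => by
        have hpar := tree_closed_walk_even hT p
        rw [hp] at hpar
        rw [Nat.odd_iff] at ho
        omega⟩
      simp [Nat.card_of_isEmpty]
    simp [hzero]
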